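/- For real k with 0 < k < 1, set k' = √(1 − k²), and define the complete elliptic integrals K(k) = ∫₀¹ dt/√((1 − t²)(1 − k²t²)) and E(k) = ∫₀¹ √(1 − k²t²)/√(1 − t²) dt. Then the Legendre relation holds: E(k)·K(k') + E(k')·K(k) − K(k)·K(k') = π/2. -/

import Mathlib

/-- The complete elliptic integral of the first kind with real modulus. -/
noncomputable def ellK (k : ℝ) : ℝ :=
  ∫ t in (0:ℝ)..1, 1 / Real.sqrt ((1 - t ^ 2) * (1 - k ^ 2 * t ^ 2))

/-- The complete elliptic integral of the second kind with real modulus. -/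
noncomputable def ellE (k : ℝ) : ℝ :=
  ∫ t in (0:ℝ)..1, Real.sqrt (1 - k ^ 2 * t ^ 2) / Real.sqrt (1 - t ^ 2)

/-!
Differentiating under the integral sign gives `E' = (E - K) / k` and, after an integration by
parts against `t √(1 - t²) / √(1 - k² t²)`, `k k'² K' = E - k'² K`. Together with
`dk'/dk = -k / k'` these make the derivative of `L(k) = E K' + E' K - K K'` vanish on `(0, 1)`,
so `L` is constant there. The elementary bounds `(1 - k²) K ≤ E ≤ π/2 ≤ K`, `k' K ≤ π/2` and
`1 ≤ E(k') ≤ 1 + k π/2` give `|L(k) - π/2| ≤ (π + 1) k K(k)`, which tends to `0` as `k → 0⁺`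
because `K` is continuous at `0`.
-/

open Real MeasureTheory Set Filter Topology intervalIntegral
open scoped Interval

lemma ae_uIoc_zero_one_of_forall_Ioo {P : ℝ → Prop} (h : ∀ t ∈ Ioo (0:ℝ) 1, P t) :
    ∀ᵐ t : ℝ, t ∈ Ι (0:ℝ) 1 → P t := by
  filter_upwards [compl_mem_ae_iff.2 (measure_singleton (1:ℝ))] with t (ht1 : t ≠ 1) ht
  rw [uIoc_of_le zero_le_one] at ht
  exact h t ⟨ht.1, ht.2.lt_of_ne ht1⟩

lemma hasDerivAt_arcsin_of_mem_Ioo {t : ℝ} (ht : t ∈ Ioo (0:ℝ) 1) :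
    HasDerivAt arcsin (√(1 - t ^ 2))⁻¹ t := by
  simpa using hasDerivAt_arcsin (by linarith [ht.1]) ht.2.ne

lemma intervalIntegrable_inv_sqrt_one_sub_sq :
    IntervalIntegrable (fun t : ℝ => (√(1 - t ^ 2))⁻¹) volume 0 1 :=
  intervalIntegrable_deriv_of_nonneg continuous_arcsin.continuousOn
    (fun t ht => hasDerivAt_arcsin_of_mem_Ioo (by simpa using ht)) (fun t _ => by positivity)

lemma integral_inv_sqrt_one_sub_sq : ∫ t in (0:ℝ)..1, (√(1 - t ^ 2))⁻¹ = π / 2 := by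
  rw [integral_eq_sub_of_hasDeriv_right_of_le zero_le_one continuous_arcsin.continuousOn
    (fun t ht => (hasDerivAt_arcsin_of_mem_Ioo ht).hasDerivWithinAt)
    intervalIntegrable_inv_sqrt_one_sub_sq, arcsin_one, arcsin_zero, sub_zero]

lemma intervalIntegrable_of_abs_le_div_sqrt {f : ℝ → ℝ} (hf : Measurable f) {C : ℝ}
    (h : ∀ t ∈ Ioo (0:ℝ) 1, |f t| ≤ C / √(1 - t ^ 2)) : IntervalIntegrable f volume 0 1 := by
  refine (intervalIntegrable_inv_sqrt_one_sub_sq.const_mul C).mono_fun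
    hf.aestronglyMeasurable ?_
  rw [EventuallyLE, ae_restrict_iff' measurableSet_uIoc]
  refine ae_uIoc_zero_one_of_forall_Ioo fun t ht => ?_
  rw [norm_eq_abs, norm_eq_abs, ← div_eq_mul_inv]
  exact (h t ht).trans (le_abs_self _)

lemma integral_le_of_le_div_sqrt {f : ℝ → ℝ} (hf : IntervalIntegrable f volume 0 1) {C : ℝ}
    (h : ∀ t ∈ Ioo (0:ℝ) 1, f t ≤ C / √(1 - t ^ 2)) : ∫ t in (0:ℝ)..1, f t ≤ C * (π / 2) := by
  rw [← integral_inv_sqrt_one_sub_sq, ← intervalIntegral.integral_const_mul]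
  exact integral_mono_on_of_le_Ioo zero_le_one hf
    (intervalIntegrable_inv_sqrt_one_sub_sq.const_mul C)
    fun t ht => (h t ht).trans_eq (div_eq_mul_inv _ _)

noncomputable def ellKIntegrand (k t : ℝ) : ℝ := 1 / √((1 - t ^ 2) * (1 - k ^ 2 * t ^ 2))

noncomputable def ellEIntegrand (k t : ℝ) : ℝ := √(1 - k ^ 2 * t ^ 2) / √(1 - t ^ 2)

noncomputable def ellKIntegrandDeriv (k t : ℝ) : ℝ :=
  k * t ^ 2 / (√(1 - t ^ 2) * √(1 - k ^ 2 * t ^ 2) ^ 3)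

noncomputable def ellEIntegrandDeriv (k t : ℝ) : ℝ :=
  -(k * t ^ 2) / (√(1 - t ^ 2) * √(1 - k ^ 2 * t ^ 2))

lemma ellK_eq_integral (k : ℝ) : ellK k = ∫ t in (0:ℝ)..1, ellKIntegrand k t := rfl

lemma ellE_eq_integral (k : ℝ) : ellE k = ∫ t in (0:ℝ)..1, ellEIntegrand k t := rfl

lemma measurable_ellKIntegrand (k : ℝ) : Measurable (ellKIntegrand k) := by
  unfold ellKIntegrand; fun_prop

lemma measurable_ellEIntegrand (k : ℝ) : Measurable (ellEIntegrand k) := by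
  unfold ellEIntegrand; fun_prop

lemma measurable_ellKIntegrandDeriv (k : ℝ) : Measurable (ellKIntegrandDeriv k) := by
  unfold ellKIntegrandDeriv; fun_prop

lemma measurable_ellEIntegrandDeriv (k : ℝ) : Measurable (ellEIntegrandDeriv k) := by
  unfold ellEIntegrandDeriv; fun_prop

section IntegrandBounds

variable {x m t : ℝ}

lemma one_sub_sq_pos (ht : t ∈ Ioo (0:ℝ) 1) : 0 < 1 - t ^ 2 := by
  nlinarith [ht.1, ht.2]

lemma sqrt_one_sub_sq_le_sqrt_one_sub_sq_mul (hxm : x ^ 2 ≤ m ^ 2) (ht : t ∈ Ioo (0:ℝ) 1) :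
    √(1 - m ^ 2) ≤ √(1 - x ^ 2 * t ^ 2) := by
  have := one_sub_sq_pos ht
  exact sqrt_le_sqrt (by nlinarith)

lemma sqrt_one_sub_sq_mul_pos (hx : x ^ 2 < 1) (ht : t ∈ Ioo (0:ℝ) 1) :
    0 < √(1 - x ^ 2 * t ^ 2) := by
  have := one_sub_sq_pos ht
  exact sqrt_pos.2 (by nlinarith)

lemma sqrt_one_sub_sq_mul_le_one : √(1 - x ^ 2 * t ^ 2) ≤ 1 :=
  sqrt_le_one.2 (by nlinarith [sq_nonneg (x * t)])

lemma abs_div_mul_pow_le {a s u w : ℝ} (n : ℕ) (ha : |a| ≤ 1) (hs : 0 < s) (hw : 0 < w)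
    (hwu : w ≤ u) : |a / (s * u ^ n)| ≤ 1 / w ^ n / s := by
  have hu : 0 < u := hw.trans_le hwu
  rw [abs_div, abs_of_pos (show 0 < s * u ^ n by positivity), div_div, mul_comm (w ^ n)]
  gcongr

lemma abs_mul_sq_le_one (hx : x ^ 2 < 1) (ht : t ∈ Ioo (0:ℝ) 1) : |x * t ^ 2| ≤ 1 := by
  rw [abs_mul, abs_of_pos (pow_pos ht.1 2)]
  have := one_sub_sq_pos ht
  exact mul_le_one₀ ((sq_le_one_iff_abs_le_one x).1 hx.le) (by positivity) (by linarith)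

variable (hxm : x ^ 2 ≤ m ^ 2) (hm : m ^ 2 < 1) (ht : t ∈ Ioo (0:ℝ) 1)
include hxm hm ht

lemma abs_ellKIntegrand_le : |ellKIntegrand x t| ≤ 1 / √(1 - m ^ 2) / √(1 - t ^ 2) := by
  have h := abs_div_mul_pow_le 1 (a := 1) (by simp) (sqrt_pos.2 (one_sub_sq_pos ht))
    (sqrt_pos.2 (by linarith)) (sqrt_one_sub_sq_le_sqrt_one_sub_sq_mul hxm ht)
  rwa [pow_one, pow_one, ← sqrt_mul (one_sub_sq_pos ht).le] at h

lemma abs_ellEIntegrandDeriv_le :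
    |ellEIntegrandDeriv x t| ≤ 1 / √(1 - m ^ 2) / √(1 - t ^ 2) := by
  have h := abs_div_mul_pow_le 1 (abs_neg (x * t ^ 2) ▸ abs_mul_sq_le_one (hxm.trans_lt hm) ht)
    (sqrt_pos.2 (one_sub_sq_pos ht)) (sqrt_pos.2 (by linarith))
    (sqrt_one_sub_sq_le_sqrt_one_sub_sq_mul hxm ht)
  rwa [pow_one, pow_one] at h

lemma abs_ellKIntegrandDeriv_le :
    |ellKIntegrandDeriv x t| ≤ 1 / √(1 - m ^ 2) ^ 3 / √(1 - t ^ 2) :=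
  abs_div_mul_pow_le 3 (abs_mul_sq_le_one (hxm.trans_lt hm) ht)
    (sqrt_pos.2 (one_sub_sq_pos ht)) (sqrt_pos.2 (by linarith))
    (sqrt_one_sub_sq_le_sqrt_one_sub_sq_mul hxm ht)

end IntegrandBounds

lemma ellEIntegrand_le (k t : ℝ) : ellEIntegrand k t ≤ 1 / √(1 - t ^ 2) :=
  div_le_div_of_nonneg_right sqrt_one_sub_sq_mul_le_one (sqrt_nonneg _)

lemma intervalIntegrable_ellKIntegrand {k : ℝ} (hk : k ^ 2 < 1) :
    IntervalIntegrable (ellKIntegrand k) volume 0 1 :=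
  intervalIntegrable_of_abs_le_div_sqrt (measurable_ellKIntegrand k)
    fun _ ht => abs_ellKIntegrand_le le_rfl hk ht

lemma intervalIntegrable_ellEIntegrand (k : ℝ) :
    IntervalIntegrable (ellEIntegrand k) volume 0 1 :=
  intervalIntegrable_of_abs_le_div_sqrt (measurable_ellEIntegrand k) fun _ _ => by
    rw [abs_of_nonneg (by unfold ellEIntegrand; positivity)]
    exact ellEIntegrand_le k _

lemma intervalIntegrable_ellKIntegrandDeriv {k : ℝ} (hk : k ^ 2 < 1) :
    IntervalIntegrable (ellKIntegrandDeriv k) volume 0 1 :=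
  intervalIntegrable_of_abs_le_div_sqrt (measurable_ellKIntegrandDeriv k)
    fun _ ht => abs_ellKIntegrandDeriv_le le_rfl hk ht

section IntegrandDeriv

variable {x t : ℝ}

lemma hasDerivAt_sqrt_one_sub_sq_mul (h : 0 < 1 - x ^ 2 * t ^ 2) :
    HasDerivAt (fun y => √(1 - y ^ 2 * t ^ 2)) (-(x * t ^ 2) / √(1 - x ^ 2 * t ^ 2)) x := by
  convert (((hasDerivAt_pow 2 x).mul_const (t ^ 2)).const_sub 1).sqrt h.ne' using 1
  field_simp
  ring

variable (hx : x ^ 2 < 1) (ht : t ∈ Ioo (0:ℝ) 1)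
include hx ht

lemma hasDerivAt_ellEIntegrand :
    HasDerivAt (ellEIntegrand · t) (ellEIntegrandDeriv x t) x := by
  have hu := sqrt_one_sub_sq_mul_pos hx ht
  refine ((hasDerivAt_sqrt_one_sub_sq_mul (sqrt_pos.1 hu)).div_const √(1 - t ^ 2)).congr_deriv ?_
  unfold ellEIntegrandDeriv
  field_simp

lemma hasDerivAt_ellKIntegrand :
    HasDerivAt (ellKIntegrand · t) (ellKIntegrandDeriv x t) x := by
  have hu := sqrt_one_sub_sq_mul_pos hx ht
  have hs := sqrt_pos.2 (one_sub_sq_pos ht)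
  have hK : (ellKIntegrand · t) = fun y => (√(1 - t ^ 2) * √(1 - y ^ 2 * t ^ 2))⁻¹ := by
    ext y
    rw [ellKIntegrand, sqrt_mul (one_sub_sq_pos ht).le, one_div]
  rw [hK]
  refine (((hasDerivAt_sqrt_one_sub_sq_mul (sqrt_pos.1 hu)).const_mul √(1 - t ^ 2)).inv
    (by positivity)).congr_deriv ?_
  unfold ellKIntegrandDeriv
  field_simp

end IntegrandDeriv

lemma hasDerivAt_integral_of_abs_deriv_le {F F' : ℝ → ℝ → ℝ} {x₀ C : ℝ} {s : Set ℝ}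
    (hs : s ∈ 𝓝 x₀) (hF_meas : ∀ x, Measurable (F x))
    (hF_int : IntervalIntegrable (F x₀) volume 0 1) (hF'_meas : Measurable (F' x₀))
    (h_bound : ∀ x ∈ s, ∀ t ∈ Ioo (0:ℝ) 1, |F' x t| ≤ C / √(1 - t ^ 2))
    (h_diff : ∀ x ∈ s, ∀ t ∈ Ioo (0:ℝ) 1, HasDerivAt (F · t) (F' x t) x) :
    HasDerivAt (fun x => ∫ t in (0:ℝ)..1, F x t) (∫ t in (0:ℝ)..1, F' x₀ t) x₀ :=
  (hasDerivAt_integral_of_dominated_loc_of_deriv_le (bound := fun t => C / √(1 - t ^ 2)) hs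
    (.of_forall fun x => (hF_meas x).aestronglyMeasurable) hF_int hF'_meas.aestronglyMeasurable
    (ae_uIoc_zero_one_of_forall_Ioo fun t ht x hx => h_bound x hx t ht)
    (by simpa [div_eq_mul_inv] using intervalIntegrable_inv_sqrt_one_sub_sq.const_mul C)
    (ae_uIoc_zero_one_of_forall_Ioo fun t ht x hx => h_diff x hx t ht)).2

lemma exists_eventually_sq_le {k : ℝ} (hk : k ^ 2 < 1) :
    ∃ m : ℝ, m ^ 2 < 1 ∧ ∀ᶠ x in 𝓝 k, x ^ 2 ≤ m ^ 2 := by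
  have hk' : |k| < 1 := (sq_lt_one_iff_abs_lt_one k).1 hk
  refine ⟨(1 + |k|) / 2, ?_, ?_⟩
  · nlinarith [abs_nonneg k]
  · have ⟨hk₁, hk₂⟩ := abs_lt.1 (show |k| < (1 + |k|) / 2 by linarith)
    filter_upwards [Ioo_mem_nhds hk₁ hk₂] with x hx
    exact sq_le_sq' hx.1.le hx.2.le

section ModulusDeriv

variable {k : ℝ} (hk : k ^ 2 < 1)
include hk

lemma hasDerivAt_ellE_integral :
    HasDerivAt ellE (∫ t in (0:ℝ)..1, ellEIntegrandDeriv k t) k := by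
  obtain ⟨m, hm, hkm⟩ := exists_eventually_sq_le hk
  exact hasDerivAt_integral_of_abs_deriv_le hkm measurable_ellEIntegrand
    (intervalIntegrable_ellEIntegrand k) (measurable_ellEIntegrandDeriv k)
    (fun x hx t ht => abs_ellEIntegrandDeriv_le hx hm ht)
    (fun x hx t ht => hasDerivAt_ellEIntegrand (hx.trans_lt hm) ht)

lemma hasDerivAt_ellK_integral :
    HasDerivAt ellK (∫ t in (0:ℝ)..1, ellKIntegrandDeriv k t) k := by
  obtain ⟨m, hm, hkm⟩ := exists_eventually_sq_le hk
  exact hasDerivAt_integral_of_abs_deriv_le hkm measurable_ellKIntegrand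
    (intervalIntegrable_ellKIntegrand hk) (measurable_ellKIntegrandDeriv k)
    (fun x hx t ht => abs_ellKIntegrandDeriv_le hx hm ht)
    (fun x hx t ht => hasDerivAt_ellKIntegrand (hx.trans_lt hm) ht)

lemma ellEIntegrandDeriv_eq (hk0 : k ≠ 0) {t : ℝ} (ht : t ∈ Ioo (0:ℝ) 1) :
    ellEIntegrandDeriv k t = (ellEIntegrand k t - ellKIntegrand k t) / k := by
  have hu := sqrt_one_sub_sq_mul_pos hk ht
  have hs := sqrt_pos.2 (one_sub_sq_pos ht)
  have hu2 := sq_sqrt (sqrt_pos.1 hu).le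
  unfold ellEIntegrandDeriv ellEIntegrand ellKIntegrand
  rw [sqrt_mul (one_sub_sq_pos ht).le]
  field_simp
  linear_combination -hu2

lemma hasDerivAt_ellE (hk0 : k ≠ 0) : HasDerivAt ellE ((ellE k - ellK k) / k) k := by
  have h := hasDerivAt_ellE_integral hk
  rwa [integral_congr_ae (ae_uIoc_zero_one_of_forall_Ioo fun _ ht =>
    ellEIntegrandDeriv_eq hk hk0 ht), intervalIntegral.integral_div, integral_sub (intervalIntegrable_ellEIntegrand k)
    (intervalIntegrable_ellKIntegrand hk)] at h

lemma hasDerivAt_mul_sqrt_div_sqrt {t : ℝ} (ht : t ∈ Ioo (0:ℝ) 1) :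
    HasDerivAt (fun τ => k ^ 2 * (τ * √(1 - τ ^ 2) / √(1 - k ^ 2 * τ ^ 2)))
      (ellEIntegrand k t - (1 - k ^ 2) * ellKIntegrand k t -
        k * (1 - k ^ 2) * ellKIntegrandDeriv k t) t := by
  have h1 := one_sub_sq_pos ht
  have hu := sqrt_one_sub_sq_mul_pos hk ht
  have hs2 := sq_sqrt h1.le
  have hu2 := sq_sqrt (sqrt_pos.1 hu).le
  have hs' := (((hasDerivAt_pow 2 t).const_sub 1).sqrt h1.ne')
  have hu' := (((hasDerivAt_pow 2 t).const_mul (k ^ 2)).const_sub 1).sqrt (sqrt_pos.1 hu).ne'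
  refine ((((hasDerivAt_id t).mul hs').div hu' hu.ne').const_mul (k ^ 2)).congr_deriv ?_
  unfold ellEIntegrand ellKIntegrand ellKIntegrandDeriv
  rw [sqrt_mul h1.le]
  simp only [id, Pi.mul_apply, Nat.cast_ofNat]
  field_simp
  rw [hs2, hu2]
  ring

lemma hasDerivAt_ellK (hk0 : k ≠ 0) :
    HasDerivAt ellK ((ellE k - (1 - k ^ 2) * ellK k) / (k * (1 - k ^ 2))) k := by
  have hE := intervalIntegrable_ellEIntegrand k
  have hK := (intervalIntegrable_ellKIntegrand hk).const_mul (1 - k ^ 2)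
  have hK' := (intervalIntegrable_ellKIntegrandDeriv hk).const_mul (k * (1 - k ^ 2))
  have hcont : ContinuousOn (fun τ => k ^ 2 * (τ * √(1 - τ ^ 2) / √(1 - k ^ 2 * τ ^ 2)))
      (Icc 0 1) := by
    refine continuousOn_const.mul (ContinuousOn.div (by fun_prop) (by fun_prop) fun τ hτ => ?_)
    have : τ ^ 2 ≤ 1 := by nlinarith [hτ.1, hτ.2]
    exact (sqrt_pos.2 (by nlinarith)).ne'
  have hFTC := integral_eq_sub_of_hasDeriv_right_of_le zero_le_one hcont
    (fun t ht => (hasDerivAt_mul_sqrt_div_sqrt hk ht).hasDerivWithinAt) ((hE.sub hK).sub hK')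
  rw [integral_sub (hE.sub hK) hK', integral_sub hE hK, intervalIntegral.integral_const_mul,
    intervalIntegral.integral_const_mul] at hFTC
  norm_num at hFTC
  convert hasDerivAt_ellK_integral hk using 1
  rw [div_eq_iff (mul_ne_zero hk0 (by linarith)), ellE_eq_integral, ellK_eq_integral]
  linear_combination hFTC

end ModulusDeriv

noncomputable def legendreL (k : ℝ) : ℝ :=
  ellE k * ellK √(1 - k ^ 2) + ellE √(1 - k ^ 2) * ellK k - ellK k * ellK √(1 - k ^ 2)

lemma hasDerivAt_sqrt_one_sub_sq {k : ℝ} (hk : k ^ 2 < 1) :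
    HasDerivAt (fun x => √(1 - x ^ 2)) (-k / √(1 - k ^ 2)) k := by
  refine (((hasDerivAt_pow 2 k).const_sub 1).sqrt (by linarith)).congr_deriv ?_
  field_simp
  ring

lemma hasDerivAt_legendreL {k : ℝ} (hk : k ∈ Ioo (0:ℝ) 1) : HasDerivAt legendreL 0 k := by
  have hk2 : k ^ 2 < 1 := by nlinarith [hk.1, hk.2]
  set b := √(1 - k ^ 2) with hb
  have hb0 : 0 < b := sqrt_pos.2 (by linarith)
  have hb2 : b ^ 2 = 1 - k ^ 2 := sq_sqrt (by linarith)
  have hb2' : b ^ 2 < 1 := by nlinarith [hk.1]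
  have hE := hasDerivAt_ellE hk2 hk.1.ne'
  have hK := hasDerivAt_ellK hk2 hk.1.ne'
  have hE' := (hasDerivAt_ellE hb2' hb0.ne').comp k (hasDerivAt_sqrt_one_sub_sq hk2)
  have hK' := (hasDerivAt_ellK hb2' hb0.ne').comp k (hasDerivAt_sqrt_one_sub_sq hk2)
  simp only [Function.comp_def, ← hb] at hE' hK'
  refine (((hE.mul hK').add (hE'.mul hK)).sub (hK.mul hK')).congr_deriv ?_
  have hk0 := hk.1.ne'
  simp only [← hb]
  rw [show 1 - b ^ 2 = k ^ 2 by linarith, ← hb2]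
  field_simp
  linear_combination (ellE k * ellK b - ellK k * ellE b) * hb2

lemma legendreL_eq_of_mem_Ioo {x y : ℝ} (hx : x ∈ Ioo (0:ℝ) 1) (hy : y ∈ Ioo (0:ℝ) 1) :
    legendreL x = legendreL y :=
  isOpen_Ioo.is_const_of_deriv_eq_zero isPreconnected_Ioo
    (fun _ hz => (hasDerivAt_legendreL hz).differentiableAt.differentiableWithinAt)
    (fun _ hz => (hasDerivAt_legendreL hz).deriv) hx hy

section IntegrandComparison

variable {k t : ℝ}

lemma ellKIntegrand_eq (ht : t ∈ Ioo (0:ℝ) 1) :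
    ellKIntegrand k t = 1 / (√(1 - t ^ 2) * √(1 - k ^ 2 * t ^ 2)) := by
  rw [ellKIntegrand, sqrt_mul (one_sub_sq_pos ht).le]

lemma one_sub_sq_mul_ellKIntegrand_le (hk : k ^ 2 < 1) (ht : t ∈ Ioo (0:ℝ) 1) :
    (1 - k ^ 2) * ellKIntegrand k t ≤ ellEIntegrand k t := by
  have hs := sqrt_pos.2 (one_sub_sq_pos ht)
  have hu := sqrt_one_sub_sq_mul_pos hk ht
  have hu2 := sq_sqrt (sqrt_pos.1 hu).le
  rw [ellKIntegrand_eq ht, ellEIntegrand, mul_one_div, div_le_div_iff₀ (by positivity) hs]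
  nlinarith [mul_nonneg hs.le (mul_nonneg (sq_nonneg k) (one_sub_sq_pos ht).le)]

lemma inv_sqrt_le_ellKIntegrand (hk : k ^ 2 < 1) (ht : t ∈ Ioo (0:ℝ) 1) :
    (√(1 - t ^ 2))⁻¹ ≤ ellKIntegrand k t := by
  have hs := sqrt_pos.2 (one_sub_sq_pos ht)
  have hu := sqrt_one_sub_sq_mul_pos hk ht
  rw [ellKIntegrand_eq ht, ← one_div]
  exact one_div_le_one_div_of_le (by positivity)
    (mul_le_of_le_one_right hs.le sqrt_one_sub_sq_mul_le_one)

lemma sqrt_one_sub_sq_mul_ellKIntegrand_le (hk : k ^ 2 < 1) (ht : t ∈ Ioo (0:ℝ) 1) :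
    √(1 - k ^ 2) * ellKIntegrand k t ≤ 1 / √(1 - t ^ 2) := by
  have hs := sqrt_pos.2 (one_sub_sq_pos ht)
  have hu := sqrt_one_sub_sq_mul_pos hk ht
  rw [ellKIntegrand_eq ht, mul_one_div, div_le_div_iff₀ (by positivity) hs, one_mul, mul_comm]
  exact mul_le_mul_of_nonneg_left (sqrt_one_sub_sq_le_sqrt_one_sub_sq_mul le_rfl ht) hs.le

lemma one_le_ellEIntegrand (hk : k ^ 2 ≤ 1) (ht : t ∈ Ioo (0:ℝ) 1) : 1 ≤ ellEIntegrand k t := by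
  have hs := sqrt_pos.2 (one_sub_sq_pos ht)
  rw [ellEIntegrand, one_le_div hs]
  exact sqrt_le_sqrt (by nlinarith)

lemma ellEIntegrand_sub_one_le (hk : k ^ 2 ≤ 1) (ht : t ∈ Ioo (0:ℝ) 1) :
    ellEIntegrand k t - 1 ≤ √(1 - k ^ 2) / √(1 - t ^ 2) := by
  have hs := sqrt_pos.2 (one_sub_sq_pos ht)
  rw [ellEIntegrand, div_sub_one hs.ne', div_le_div_iff_of_pos_right hs, sub_le_iff_le_add']
  have hs2 := sq_sqrt (one_sub_sq_pos ht).le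
  have hc2 := sq_sqrt (sub_nonneg.2 hk)
  refine sqrt_le_iff.2 ⟨by positivity, ?_⟩
  nlinarith [mul_nonneg hs.le (sqrt_nonneg (1 - k ^ 2)),
    mul_nonneg (one_sub_sq_pos ht).le (sub_nonneg.2 hk)]

end IntegrandComparison

section ModulusBounds

variable {k : ℝ}

lemma one_sub_sq_mul_ellK_le_ellE (hk : k ^ 2 < 1) : (1 - k ^ 2) * ellK k ≤ ellE k := by
  rw [ellK_eq_integral, ellE_eq_integral, ← intervalIntegral.integral_const_mul]
  exact integral_mono_on_of_le_Ioo zero_le_one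
    ((intervalIntegrable_ellKIntegrand hk).const_mul _) (intervalIntegrable_ellEIntegrand k)
    fun _ ht => one_sub_sq_mul_ellKIntegrand_le hk ht

lemma ellE_le_pi_div_two (k : ℝ) : ellE k ≤ π / 2 := by
  rw [ellE_eq_integral]
  simpa using integral_le_of_le_div_sqrt (intervalIntegrable_ellEIntegrand k)
    fun t _ => ellEIntegrand_le k t

lemma pi_div_two_le_ellK (hk : k ^ 2 < 1) : π / 2 ≤ ellK k := by
  rw [← integral_inv_sqrt_one_sub_sq]
  exact integral_mono_on_of_le_Ioo zero_le_one intervalIntegrable_inv_sqrt_one_sub_sq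
    (intervalIntegrable_ellKIntegrand hk) fun _ ht => inv_sqrt_le_ellKIntegrand hk ht

lemma sqrt_one_sub_sq_mul_ellK_le (hk : k ^ 2 < 1) : √(1 - k ^ 2) * ellK k ≤ π / 2 := by
  rw [ellK_eq_integral, ← intervalIntegral.integral_const_mul]
  simpa using integral_le_of_le_div_sqrt ((intervalIntegrable_ellKIntegrand hk).const_mul _)
    fun _ ht => sqrt_one_sub_sq_mul_ellKIntegrand_le hk ht

lemma one_le_ellE (hk : k ^ 2 ≤ 1) : 1 ≤ ellE k := by
  rw [ellE_eq_integral]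
  simpa using integral_mono_on_of_le_Ioo zero_le_one intervalIntegrable_const
    (intervalIntegrable_ellEIntegrand k) fun _ ht => one_le_ellEIntegrand hk ht

lemma ellE_le_one_add (hk : k ^ 2 ≤ 1) : ellE k ≤ 1 + √(1 - k ^ 2) * (π / 2) := by
  have h := integral_le_of_le_div_sqrt
    ((intervalIntegrable_ellEIntegrand k).sub intervalIntegrable_const)
    fun _ ht => ellEIntegrand_sub_one_le hk ht
  rw [integral_sub (intervalIntegrable_ellEIntegrand k) intervalIntegrable_const] at h
  simp only [intervalIntegral.integral_const, sub_zero, smul_eq_mul, mul_one] at h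
  rw [ellE_eq_integral]
  linarith

end ModulusBounds

lemma abs_legendreL_sub_le {k : ℝ} (hk : k ∈ Ioo (0:ℝ) 1) :
    |legendreL k - π / 2| ≤ (π + 1) * k * ellK k := by
  have hk2 : k ^ 2 < 1 := by nlinarith [hk.1, hk.2]
  set b := √(1 - k ^ 2) with hb
  have hb2 : b ^ 2 = 1 - k ^ 2 := sq_sqrt (by linarith)
  have hb2' : b ^ 2 < 1 := by nlinarith [hk.1]
  have hkb : √(1 - b ^ 2) = k := by rw [hb2, sub_sub_cancel, sqrt_sq hk.1.le]
  have hEK := one_sub_sq_mul_ellK_le_ellE hk2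
  have hE := ellE_le_pi_div_two k
  have hK := pi_div_two_le_ellK hk2
  have hK' := pi_div_two_le_ellK hb2'
  have hkK' : k * ellK b ≤ π / 2 := hkb ▸ sqrt_one_sub_sq_mul_ellK_le hb2'
  have hE'₁ := one_le_ellE hb2'.le
  have hE'₂ : ellE b ≤ 1 + k * (π / 2) := hkb ▸ ellE_le_one_add hb2'.le
  have hK₀ : 0 ≤ ellK k := by linarith [pi_pos]
  have hK'₀ : 0 ≤ ellK b := by linarith [pi_pos]
  have hkK : 0 ≤ k * ellK k := mul_nonneg hk.1.le hK₀
  unfold legendreL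
  rw [← hb, abs_le]
  -- `L - π/2 = (E - K) K' + (E' - 1) K + (K - π/2)`, each term of size `O(k K)`
  constructor
  · nlinarith [mul_nonneg (sub_nonneg.2 hEK) hK'₀, mul_nonneg hkK (sub_nonneg.2 hkK'),
      mul_nonneg (sub_nonneg.2 hE'₁) hK₀, pi_pos]
  · nlinarith [mul_nonneg (by linarith : 0 ≤ ellK k - ellE k) hK'₀,
      mul_nonneg (sub_nonneg.2 hE'₂) hK₀, mul_nonneg hkK (by linarith [hk.2] : 0 ≤ 1 - k), pi_pos]

/-- The Legendre relation `E K' + E' K − K K' = π/2` for `0 < k < 1`,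
with `k' = √(1−k²)`. -/
theorem legendre_relation (k : ℝ) (hk0 : 0 < k) (hk1 : k < 1) :
    ellE k * ellK (Real.sqrt (1 - k ^ 2)) + ellE (Real.sqrt (1 - k ^ 2)) * ellK k -
      ellK k * ellK (Real.sqrt (1 - k ^ 2)) = Real.pi / 2 := by
  have hlim : Tendsto (fun x => (π + 1) * x * ellK x) (𝓝[>] 0) (𝓝 0) := by
    have hK : ContinuousAt ellK 0 := (hasDerivAt_ellK_integral (by norm_num)).continuousAt
    have h : ContinuousAt (fun x => (π + 1) * x * ellK x) 0 := by fun_prop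
    simpa using h.tendsto.mono_left nhdsWithin_le_nhds
  have hle : ∀ᶠ x in 𝓝[>] 0, |legendreL k - π / 2| ≤ (π + 1) * x * ellK x := by
    filter_upwards [Ioo_mem_nhdsGT one_pos] with x hx
    rw [legendreL_eq_of_mem_Ioo ⟨hk0, hk1⟩ hx]
    exact abs_legendreL_sub_le hx
  exact sub_eq_zero.1 (abs_nonpos_iff.1 (ge_of_tendsto hlim hle))
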